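/- arXiv:1511.08911 — 4 statements merged into one kernel-verified Lean document; each statement's English description precedes it below -/
import Mathlib

section
/- Let G be a bull-free graph, and let F be a P_3-connected induced subgraph of G. Suppose there are adjacent vertices x, y in G not in F such that x has no neighbor in F and y has two adjacent neighbors in F. Then y is adjacent to every vertex of F. -/
/-- The bull: vertices `a,b,c,d,e = 0,1,2,3,4` with edges `ab, bc, cd, be, ce`. -/
def bull : SimpleGraph (Fin 5) :=
  SimpleGraph.fromRel (fun a b => (a, b) ∈
    ([(0,1),(1,2),(2,3),(1,4),(2,4)] : List (Fin 5 × Fin 5)))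

/-- `G` contains no induced subgraph isomorphic to `F`. -/
def InducedFree {α β : Type*} (F : SimpleGraph α) (G : SimpleGraph β) : Prop :=
  ¬ ∃ f : α ↪ β, ∀ a b : α, G.Adj (f a) (f b) ↔ F.Adj a b

/-- Two edges `e, f` of `G` share a vertex and their union induces a `P₃` in `G`. -/
def P3Step {V : Type*} (G : SimpleGraph V) (e f : Sym2 V) : Prop :=
  ∃ u a b : V, e = s(u, a) ∧ f = s(u, b) ∧ G.Adj u a ∧ G.Adj u b ∧ a ≠ b ∧ ¬ G.Adj a b

/-- `G` is `P₃`-connected: it is connected, and any two edges are linked by a sequence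
of edges in which consecutive edges share a vertex and their union induces a `P₃`. -/
def P3Connected {V : Type*} (G : SimpleGraph V) : Prop :=
  G.Connected ∧ ∀ e ∈ G.edgeSet, ∀ f ∈ G.edgeSet, Relation.ReflTransGen (P3Step G) e f

/-!
Call an edge of `F` *good* if `y` is adjacent to both of its ends. If `uv` is good and
`uv, uw` induce a `P₃`, then `w` is adjacent to `y`: otherwise `x, y, u, w, v` would induce a
bull (triangle `y u v`, pendant `x` at `y`, pendant `w` at `u`). So goodness propagates along
`P₃`-steps, hence from `ab` to every edge of `F`, and every vertex of `F` lies on an edge since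
`F` is connected with at least two vertices.
-/

namespace SimpleGraph

variable {V : Type*} {G : SimpleGraph V}

lemma adj_of_inducedFree_bull (hbull : InducedFree bull G) {x y u v w : V}
    (hxy : G.Adj x y) (hyu : G.Adj y u) (hyv : G.Adj y v) (huv : G.Adj u v) (huw : G.Adj u w)
    (hvw : ¬ G.Adj v w) (hxu : ¬ G.Adj x u) (hxv : ¬ G.Adj x v) (hxw : ¬ G.Adj x w) :
    G.Adj y w := by
  by_contra hyw
  have hxu' : x ≠ u := fun h => hxv (h ▸ huv)
  have hxv' : x ≠ v := fun h => hxu (h ▸ huv.symm)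
  have hxw' : x ≠ w := fun h => hxu (h ▸ huw.symm)
  have hyw' : y ≠ w := fun h => hxw (h ▸ hxy)
  have hvw' : v ≠ w := fun h => hyw (h ▸ hyv)
  have hinj : Function.Injective ![x, y, u, w, v] := by
    intro i j h
    fin_cases i <;> fin_cases j <;> simp_all [eq_comm]
  refine hbull ⟨⟨_, hinj⟩, fun i j => ?_⟩
  fin_cases i <;> fin_cases j <;> simp_all [bull, fromRel_adj, adj_comm]

variable {F : Set V} {x y : V}

lemma forall_adj_of_p3Step_induce (hbull : InducedFree bull G) (hxy : G.Adj x y)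
    (hxF : ∀ v ∈ F, ¬ G.Adj x v) {e f : Sym2 F} (hef : P3Step (G.induce F) e f)
    (he : ∀ z ∈ e, G.Adj y z) : ∀ z ∈ f, G.Adj y z := by
  obtain ⟨u, v, w, rfl, rfl, huv, huw, -, hvw⟩ := hef
  have hyw := adj_of_inducedFree_bull hbull hxy (he u (Sym2.mem_mk_left _ _))
    (he v (Sym2.mem_mk_right _ _)) huv huw hvw (hxF _ u.2) (hxF _ v.2) (hxF _ w.2)
  simpa [he u (Sym2.mem_mk_left _ _)] using hyw

lemma forall_adj_of_reflTransGen_p3Step_induce (hbull : InducedFree bull G) (hxy : G.Adj x y)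
    (hxF : ∀ v ∈ F, ¬ G.Adj x v) {e f : Sym2 F}
    (hef : Relation.ReflTransGen (P3Step (G.induce F)) e f)
    (he : ∀ z ∈ e, G.Adj y z) : ∀ z ∈ f, G.Adj y z := by
  induction hef with
  | refl => exact he
  | tail _ hstep ih => exact forall_adj_of_p3Step_induce hbull hxy hxF hstep ih

end SimpleGraph

theorem complete_of_P3Connected_general {V : Type*} (G : SimpleGraph V)
    (hbull : InducedFree bull G) (F : Set V) (hF : P3Connected (G.induce F))
    (x y : V) (hxy : G.Adj x y)
    (hxF : ∀ v ∈ F, ¬ G.Adj x v)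
    (hyF : ∃ a ∈ F, ∃ b ∈ F, G.Adj a b ∧ G.Adj y a ∧ G.Adj y b) :
    ∀ v ∈ F, G.Adj y v := by
  intro v hv
  obtain ⟨a, ha, b, hb, hab, hya, hyb⟩ := hyF
  have : Nontrivial F := ⟨⟨a, ha⟩, ⟨b, hb⟩, by simpa using hab.ne⟩
  obtain ⟨w, hvw⟩ := hF.1.preconnected.exists_adj_of_nontrivial ⟨v, hv⟩
  have hchain := hF.2 s(⟨a, ha⟩, ⟨b, hb⟩) hab s(⟨v, hv⟩, w) hvw
  exact SimpleGraph.forall_adj_of_reflTransGen_p3Step_induce hbull hxy hxF hchain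
    (by simp [hya, hyb]) _ (Sym2.mem_mk_left _ _)

/-- In a bull-free graph `G`, if `F` induces a `P₃`-connected subgraph, `x, y ∉ F` are
adjacent, `x` has no neighbor in `F`, and `y` has two adjacent neighbors in `F`,
then `y` is complete to `F`. -/
theorem complete_of_P3Connected {V : Type*} (G : SimpleGraph V)
    (hbull : InducedFree bull G) (F : Set V) (hF : P3Connected (G.induce F))
    (x y : V) (hx : x ∉ F) (hy : y ∉ F) (hxy : G.Adj x y)
    (hxF : ∀ v ∈ F, ¬ G.Adj x v)
    (hyF : ∃ a ∈ F, ∃ b ∈ F, G.Adj a b ∧ G.Adj y a ∧ G.Adj y b) :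
    ∀ v ∈ F, G.Adj y v :=
  complete_of_P3Connected_general G hbull F hF x y hxy hxF hyF
end

section
/- The graph F_0 (seven vertices v_1,...,v_7 with edges forming a 5-cycle v_1v_2v_3v_4v_5, vertex v_6 adjacent to all of v_1,...,v_5, and vertex v_7 adjacent to v_1,v_2,v_3,v_4) is P_3-connected. -/
/-! Connectivity of `F₀` is a finite check. Since `P3Step` is symmetric, it suffices to link
every edge to the single edge `v₆v₁`, and for that an ordering of the remaining edges in which
each one forms an induced `P₃` with `v₆v₁` or with a later edge is enough. -/

/-- The graph `F₀`: a 5-cycle `v₁…v₅ = 0,…,4`, a vertex `v₆ = 5` complete to the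
cycle, and a vertex `v₇ = 6` adjacent to `v₁, v₂, v₃, v₄`. -/
def F0 : SimpleGraph (Fin 7) :=
  SimpleGraph.fromRel (fun a b => (a, b) ∈
    ([(0,1),(1,2),(2,3),(3,4),(4,0),
      (5,0),(5,1),(5,2),(5,3),(5,4),
      (6,0),(6,1),(6,2),(6,3)] : List (Fin 7 × Fin 7)))

open Relation

theorem Relation.forall_mem_reflTransGen_of_step_later {α : Type*} {r : α → α → Prop} {x₀ : α} :
    ∀ {l : List α}, (∀ i (hi : i < l.length), ∃ y ∈ x₀ :: l.drop (i + 1), r l[i] y) →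
      ∀ x ∈ l, ReflTransGen r x x₀
  | [], _ => by simp
  | x :: l, h => by
    have hl : ∀ y ∈ l, ReflTransGen r y x₀ :=
      forall_mem_reflTransGen_of_step_later fun i hi => h (i + 1) (by simpa using hi)
    have hx : ReflTransGen r x x₀ := by
      obtain ⟨y, hy, hxy⟩ := h 0 (by simp)
      rcases List.mem_cons.1 hy with rfl | hy
      · exact .single hxy
      · exact .head hxy (hl y (by simpa using hy))
    simpa [hx] using hl

instance P3Step.instDecidableRel {V : Type*} [Fintype V] [DecidableEq V] (G : SimpleGraph V)
    [DecidableRel G.Adj] : DecidableRel (P3Step G) := fun _ _ => by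
  unfold P3Step; infer_instance

instance P3Step.instSymm {V : Type*} (G : SimpleGraph V) : Std.Symm (P3Step G) where
  symm _ _ := fun ⟨u, a, b, he, hf, hua, hub, hab, hnadj⟩ =>
    ⟨u, b, a, hf, he, hub, hua, hab.symm, fun h => hnadj h.symm⟩

theorem P3Connected.of_forall_reflTransGen {V : Type*} {G : SimpleGraph V} (hG : G.Connected)
    (e₀ : Sym2 V) (h : ∀ e ∈ G.edgeSet, ReflTransGen (P3Step G) e e₀) : P3Connected G :=
  ⟨hG, fun e he f hf => (h e he).trans (symm (h f hf))⟩

instance : DecidableRel F0.Adj := fun a b =>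
  decidable_of_iff _ (SimpleGraph.fromRel_adj _ a b).symm

def F0.edgesTowardHub : List (Sym2 (Fin 7)) :=
  [s(2,3), s(3,4), s(1,2), s(0,1), s(0,4), s(6,2), s(6,1), s(6,3), s(6,0),
    s(5,4), s(5,1), s(5,3), s(5,2)]

/-- The graph `F₀` is `P₃`-connected. -/
theorem F0_P3Connected : P3Connected F0 := by
  refine .of_forall_reflTransGen (by decide) s(5, 0) fun e he => ?_
  have hcover : ∀ e ∈ F0.edgeSet, e ∈ s(5, 0) :: F0.edgesTowardHub := by decide
  rcases List.mem_cons.1 (hcover e he) with rfl | he'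
  · rfl
  · exact forall_mem_reflTransGen_of_step_later (by decide) e he'
end

section
/- Let G be a (P_6, bull)-free graph, let D be a connected bipartite induced subgraph with parts A and B (both nonempty), let v_1 be a vertex complete to D and let x_0 be a vertex adjacent to v_1 and anticomplete to D, and let W_D be the set of vertices u adjacent to x_0, nonadjacent to v_1, and having a neighbor in each of A and B. Then B contains a vertex complete to W_D. -/
/-- If `G` is bull-free, then there are no five vertices forming a bull pattern:
a triangle `p1 p2 p4` with pendant `p0` at `p1` and pendant `p3` at `p2`. -/
lemma no_bull {V : Type*} {G : SimpleGraph V} (hbull : InducedFree bull G)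
    {p0 p1 p2 p3 p4 : V}
    (h01 : G.Adj p0 p1) (h12 : G.Adj p1 p2) (h23 : G.Adj p2 p3)
    (h14 : G.Adj p1 p4) (h24 : G.Adj p2 p4)
    (n02 : ¬ G.Adj p0 p2) (n03 : ¬ G.Adj p0 p3) (n04 : ¬ G.Adj p0 p4)
    (n13 : ¬ G.Adj p1 p3) (n34 : ¬ G.Adj p3 p4) : False := by
  have d01 : p0 ≠ p1 := h01.ne
  have d12 : p1 ≠ p2 := h12.ne
  have d23 : p2 ≠ p3 := h23.ne
  have d14 : p1 ≠ p4 := h14.ne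
  have d24 : p2 ≠ p4 := h24.ne
  have d02 : p0 ≠ p2 := fun h => n03 (by rw [h]; exact h23)
  have d03 : p0 ≠ p3 := fun h => n13 (by rw [← h]; exact h01.symm)
  have d04 : p0 ≠ p4 := fun h => n02 (by rw [h]; exact h24.symm)
  have d13 : p1 ≠ p3 := fun h => n03 (by rw [← h]; exact h01)
  have d34 : p3 ≠ p4 := fun h => n13 (by rw [h]; exact h14)
  have s01 := h01.symm; have s12 := h12.symm; have s23 := h23.symm
  have s14 := h14.symm; have s24 := h24.symm
  have m02 : ¬ G.Adj p2 p0 := fun h => n02 h.symm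
  have m03 : ¬ G.Adj p3 p0 := fun h => n03 h.symm
  have m04 : ¬ G.Adj p4 p0 := fun h => n04 h.symm
  have m13 : ¬ G.Adj p3 p1 := fun h => n13 h.symm
  have m34 : ¬ G.Adj p4 p3 := fun h => n34 h.symm
  have i0 : ¬ G.Adj p0 p0 := G.irrefl
  have i1 : ¬ G.Adj p1 p1 := G.irrefl
  have i2 : ¬ G.Adj p2 p2 := G.irrefl
  have i3 : ¬ G.Adj p3 p3 := G.irrefl
  have i4 : ¬ G.Adj p4 p4 := G.irrefl
  have e0 : (![p0,p1,p2,p3,p4] : Fin 5 → V) 0 = p0 := rfl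
  have e1 : (![p0,p1,p2,p3,p4] : Fin 5 → V) 1 = p1 := rfl
  have e2 : (![p0,p1,p2,p3,p4] : Fin 5 → V) 2 = p2 := rfl
  have e3 : (![p0,p1,p2,p3,p4] : Fin 5 → V) 3 = p3 := rfl
  have e4 : (![p0,p1,p2,p3,p4] : Fin 5 → V) 4 = p4 := rfl
  apply hbull
  refine ⟨⟨![p0,p1,p2,p3,p4], ?_⟩, ?_⟩
  · intro a b h
    fin_cases a <;> fin_cases b <;>
      simp only [e0,e1,e2,e3,e4] at h <;>
      first
        | rfl
        | exact absurd h (by assumption)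
        | exact absurd h.symm (by assumption)
  · intro a b
    fin_cases a <;> fin_cases b <;>
      simp only [e0,e1,e2,e3,e4] <;>
      first
        | exact iff_of_true (by assumption)
            (by rw [bull, SimpleGraph.fromRel_adj]; decide)
        | exact iff_of_false (by assumption)
            (by rw [bull, SimpleGraph.fromRel_adj]; decide)

/-- If `G` is `P₆`-free, then there are no six vertices forming an induced
six-vertex path `q0 - q1 - q2 - q3 - q4 - q5`. -/
lemma no_P6 {V : Type*} {G : SimpleGraph V}
    (hP6 : InducedFree (SimpleGraph.pathGraph 6) G)
    {q0 q1 q2 q3 q4 q5 : V}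
    (h01 : G.Adj q0 q1) (h12 : G.Adj q1 q2) (h23 : G.Adj q2 q3)
    (h34 : G.Adj q3 q4) (h45 : G.Adj q4 q5)
    (n02 : ¬ G.Adj q0 q2) (n03 : ¬ G.Adj q0 q3) (n04 : ¬ G.Adj q0 q4)
    (n05 : ¬ G.Adj q0 q5) (n13 : ¬ G.Adj q1 q3) (n14 : ¬ G.Adj q1 q4)
    (n15 : ¬ G.Adj q1 q5) (n24 : ¬ G.Adj q2 q4) (n25 : ¬ G.Adj q2 q5)
    (n35 : ¬ G.Adj q3 q5) : False := by
  have d01 : q0 ≠ q1 := h01.ne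
  have d12 : q1 ≠ q2 := h12.ne
  have d23 : q2 ≠ q3 := h23.ne
  have d34 : q3 ≠ q4 := h34.ne
  have d45 : q4 ≠ q5 := h45.ne
  have d02 : q0 ≠ q2 := fun h => n03 (by rw [h]; exact h23)
  have d03 : q0 ≠ q3 := fun h => n04 (by rw [h]; exact h34)
  have d04 : q0 ≠ q4 := fun h => n05 (by rw [h]; exact h45)
  have d05 : q0 ≠ q5 := fun h => n04 (by rw [h]; exact h45.symm)
  have d13 : q1 ≠ q3 := fun h => n14 (by rw [h]; exact h34)
  have d14 : q1 ≠ q4 := fun h => n15 (by rw [h]; exact h45)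
  have d15 : q1 ≠ q5 := fun h => n14 (by rw [h]; exact h45.symm)
  have d24 : q2 ≠ q4 := fun h => n25 (by rw [h]; exact h45)
  have d25 : q2 ≠ q5 := fun h => n24 (by rw [h]; exact h45.symm)
  have d35 : q3 ≠ q5 := fun h => n25 (by rw [← h]; exact h23)
  have s01 := h01.symm; have s12 := h12.symm; have s23 := h23.symm
  have s34 := h34.symm; have s45 := h45.symm
  have m02 : ¬ G.Adj q2 q0 := fun h => n02 h.symm
  have m03 : ¬ G.Adj q3 q0 := fun h => n03 h.symm
  have m04 : ¬ G.Adj q4 q0 := fun h => n04 h.symm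
  have m05 : ¬ G.Adj q5 q0 := fun h => n05 h.symm
  have m13 : ¬ G.Adj q3 q1 := fun h => n13 h.symm
  have m14 : ¬ G.Adj q4 q1 := fun h => n14 h.symm
  have m15 : ¬ G.Adj q5 q1 := fun h => n15 h.symm
  have m24 : ¬ G.Adj q4 q2 := fun h => n24 h.symm
  have m25 : ¬ G.Adj q5 q2 := fun h => n25 h.symm
  have m35 : ¬ G.Adj q5 q3 := fun h => n35 h.symm
  have i0 : ¬ G.Adj q0 q0 := G.irrefl
  have i1 : ¬ G.Adj q1 q1 := G.irrefl
  have i2 : ¬ G.Adj q2 q2 := G.irrefl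
  have i3 : ¬ G.Adj q3 q3 := G.irrefl
  have i4 : ¬ G.Adj q4 q4 := G.irrefl
  have i5 : ¬ G.Adj q5 q5 := G.irrefl
  have e0 : (![q0,q1,q2,q3,q4,q5] : Fin 6 → V) 0 = q0 := rfl
  have e1 : (![q0,q1,q2,q3,q4,q5] : Fin 6 → V) 1 = q1 := rfl
  have e2 : (![q0,q1,q2,q3,q4,q5] : Fin 6 → V) 2 = q2 := rfl
  have e3 : (![q0,q1,q2,q3,q4,q5] : Fin 6 → V) 3 = q3 := rfl
  have e4 : (![q0,q1,q2,q3,q4,q5] : Fin 6 → V) 4 = q4 := rfl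
  have e5 : (![q0,q1,q2,q3,q4,q5] : Fin 6 → V) 5 = q5 := rfl
  apply hP6
  refine ⟨⟨![q0,q1,q2,q3,q4,q5], ?_⟩, ?_⟩
  · intro a b h
    fin_cases a <;> fin_cases b <;>
      simp only [e0,e1,e2,e3,e4,e5] at h <;>
      first
        | rfl
        | exact absurd h (by assumption)
        | exact absurd h.symm (by assumption)
  · intro a b
    fin_cases a <;> fin_cases b <;>
      simp only [e0,e1,e2,e3,e4,e5] <;>
      first
        | exact iff_of_true (by assumption) (by rw [SimpleGraph.pathGraph_adj]; decide)
        | exact iff_of_false (by assumption) (by rw [SimpleGraph.pathGraph_adj]; decide)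

/-- Every vertex of the connected induced subgraph on `A ∪ B` that is not the
only vertex has a neighbour inside `A ∪ B`. -/
lemma exists_nbr {V : Type*} {G : SimpleGraph V} {A B : Set V}
    (hconn : (G.induce (A ∪ B)).Connected) {d e : V} (hd : d ∈ A ∪ B)
    (he : e ∈ A ∪ B) (hne : d ≠ e) : ∃ z ∈ A ∪ B, G.Adj d z := by
  obtain ⟨w⟩ := hconn.preconnected ⟨d, hd⟩ ⟨e, he⟩
  have key : ∀ (x y : ↥(A ∪ B)) (_ : (G.induce (A ∪ B)).Walk x y),
      (x : V) ≠ (y : V) → ∃ z ∈ A ∪ B, G.Adj (x : V) z := by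
    intro x y w
    induction w with
    | nil => intro h; exact absurd rfl h
    | @cons xa xb xc hadj p ih =>
        intro _
        exact ⟨(xb : V), xb.2, by simpa using hadj⟩
  exact key _ _ w hne

/-- Propagation lemma: if `u` is adjacent to `x0` (which is anticomplete to
`A ∪ B`), and `u` has two adjacent neighbours `s, t` in the bipartite connected
induced subgraph on `A ∪ B`, then (in a bull-free graph) `u` is complete
to `A ∪ B`. -/
lemma lemmaP {V : Type*} {G : SimpleGraph V} (hbull : InducedFree bull G)
    {A B : Set V}
    (hAstable : ∀ a ∈ A, ∀ a' ∈ A, ¬ G.Adj a a')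
    (hBstable : ∀ b ∈ B, ∀ b' ∈ B, ¬ G.Adj b b')
    (hconn : (G.induce (A ∪ B)).Connected)
    {x0 u : V} (hx0 : ∀ d ∈ A ∪ B, ¬ G.Adj x0 d) (hux0 : G.Adj u x0)
    {s t : V} (hs : s ∈ A ∪ B) (ht : t ∈ A ∪ B)
    (hus : G.Adj u s) (hut : G.Adj u t) (hst : G.Adj s t) :
    ∀ d ∈ A ∪ B, G.Adj u d := by
  have star : ∀ x z t' : V, x ∈ A ∪ B → z ∈ A ∪ B → t' ∈ A ∪ B →
      G.Adj u x → G.Adj u t' → G.Adj t' x → G.Adj x z → G.Adj u z := by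
    intro x z t' hx hz ht' hux hut' ht'x hxz
    by_contra hnz
    have hzt' : ¬ G.Adj z t' := by
      rcases hx with hxA | hxB
      · have hzB : z ∈ B := by
          rcases hz with h | h
          · exact absurd hxz.symm (hAstable z h x hxA)
          · exact h
        have ht'B : t' ∈ B := by
          rcases ht' with h | h
          · exact absurd ht'x (hAstable t' h x hxA)
          · exact h
        exact hBstable z hzB t' ht'B
      · have hzA : z ∈ A := by
          rcases hz with h | h
          · exact h
          · exact absurd hxz.symm (hBstable z h x hxB)
        have ht'A : t' ∈ A := by
          rcases ht' with h | h
          · exact h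
          · exact absurd ht'x (hBstable t' h x hxB)
        exact hAstable z hzA t' ht'A
    exact no_bull hbull (hxz.symm) (hux.symm) hux0 (ht'x.symm) hut'
      (fun h => hnz h.symm) (fun h => hx0 z hz h.symm) hzt'
      (fun h => hx0 x hx h.symm) (hx0 t' ht')
  intro d hd
  obtain ⟨w⟩ := hconn.preconnected ⟨s, hs⟩ ⟨d, hd⟩
  have key : ∀ (x y : ↥(A ∪ B)) (_ : (G.induce (A ∪ B)).Walk x y),
      G.Adj u (x : V) → (∃ t' ∈ A ∪ B, G.Adj u t' ∧ G.Adj t' (x : V)) →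
      G.Adj u (y : V) := by
    intro x y w
    induction w with
    | nil => exact fun h _ => h
    | @cons xa xb xc hadj p ih =>
        intro hux ht'ex
        obtain ⟨t', ht', hut', ht'x⟩ := ht'ex
        have hxx' : G.Adj (xa : V) (xb : V) := by simpa using hadj
        have hux' : G.Adj u (xb : V) :=
          star xa xb t' xa.2 xb.2 ht' hux hut' ht'x hxx'
        exact ih hux' ⟨(xa : V), xa.2, hux, hxx'⟩
  exact key _ _ w hus ⟨t, ht, hut, hst.symm⟩

/-- Claim (11) in the proof of Theorem 4.2: let `G` be a finite `(P₆, bull)`-free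
graph, let `D = A ∪ B` induce a connected bipartite subgraph with nonempty stable
parts `A` and `B`, let `v₁` be complete to `D`, let `x₀` be adjacent to `v₁` and
anticomplete to `D`, and let `W_D` consist of vertices adjacent to `x₀`, nonadjacent
to `v₁`, each with a neighbor in `A` and a neighbor in `B`. Then `B` contains a
vertex complete to `W_D`. -/
theorem B_has_vertex_complete_to_WD {V : Type*} [Fintype V] (G : SimpleGraph V)
    (hP6 : InducedFree (SimpleGraph.pathGraph 6) G) (hbull : InducedFree bull G)
    (A B : Set V) (hA : A.Nonempty) (hB : B.Nonempty) (hAB : Disjoint A B)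
    (hAstable : ∀ a ∈ A, ∀ a' ∈ A, ¬ G.Adj a a')
    (hBstable : ∀ b ∈ B, ∀ b' ∈ B, ¬ G.Adj b b')
    (hconn : (G.induce (A ∪ B)).Connected)
    (v1 x0 : V) (hv1 : ∀ d ∈ A ∪ B, G.Adj v1 d)
    (hx0v1 : G.Adj x0 v1) (hx0 : ∀ d ∈ A ∪ B, ¬ G.Adj x0 d)
    (WD : Set V)
    (hWD : ∀ u ∈ WD, G.Adj u x0 ∧ ¬ G.Adj u v1 ∧
      (∃ a ∈ A, G.Adj u a) ∧ (∃ b ∈ B, G.Adj u b)) :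
    ∃ d ∈ B, ∀ u ∈ WD, G.Adj d u := by
  classical
  obtain ⟨α0, hα0⟩ := hA
  obtain ⟨β0, hβ0⟩ := hB
  by_cases hWne : WD.Nonempty
  swap
  · exact ⟨β0, hβ0, fun u hu => absurd ⟨u, hu⟩ hWne⟩
  -- Main pairwise lemma
  have main : ∀ u ∈ WD, ∀ u' ∈ WD, ∀ b ∈ B, ∀ b' ∈ B,
      G.Adj u b → ¬ G.Adj u' b → G.Adj u' b' → ¬ G.Adj u b' → False := by
    intro u hu u' hu' b hbB b' hb'B hub hn hu'b' hn'
    obtain ⟨hux0, hnv1u, ⟨aa, haaA, huaa⟩, -⟩ := hWD u hu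
    obtain ⟨hu'x0, hnv1u', -, -⟩ := hWD u' hu'
    by_cases huu' : G.Adj u u'
    · -- bull on b, u, u', b', x0
      exact no_bull hbull hub.symm huu' hu'b' hux0 hu'x0
        (fun h => hn h.symm) (hBstable b hbB b' hb'B)
        (fun h => hx0 b (Or.inr hbB) h.symm) hn'
        (fun h => hx0 b' (Or.inr hb'B) h.symm)
    · -- u and u' are nonadjacent
      have Pu : ∀ p q : V, p ∈ A ∪ B → q ∈ A ∪ B →
          G.Adj u p → G.Adj u q → G.Adj p q → False := fun p q hp hq h1 h2 h3 =>
        hn' (lemmaP hbull hAstable hBstable hconn hx0 hux0 hp hq h1 h2 h3 b'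
          (Or.inr hb'B))
      have Pu' : ∀ p q : V, p ∈ A ∪ B → q ∈ A ∪ B →
          G.Adj u' p → G.Adj u' q → G.Adj p q → False := fun p q hp hq h1 h2 h3 =>
        hn (lemmaP hbull hAstable hBstable hconn hx0 hu'x0 hp hq h1 h2 h3 b
          (Or.inr hbB))
      -- Step 2: every A-neighbour of b is nonadjacent to u, u' and adjacent to b'
      have step2 : ∀ a ∈ A, G.Adj a b →
          ¬ G.Adj a u ∧ ¬ G.Adj a u' ∧ G.Adj a b' := by
        intro a haA hab
        have h1 : ¬ G.Adj a u := fun h =>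
          Pu a b (Or.inl haA) (Or.inr hbB) h.symm hub hab
        have h2 : ¬ G.Adj a u' := fun h =>
          no_bull hbull hub hab.symm h (hv1 b (Or.inr hbB)).symm
            (hv1 a (Or.inl haA)).symm (fun hh => h1 hh.symm) huu' hnv1u
            (fun hh => hn hh.symm) hnv1u'
        have h3 : G.Adj a b' := by
          by_contra hc
          exact no_P6 hP6 hab hub.symm hux0 hu'x0.symm hu'b'
            h1 (fun h => hx0 a (Or.inl haA) h.symm) h2 hc
            (fun h => hx0 b (Or.inr hbB) h.symm) (fun h => hn h.symm)
            (hBstable b hbB b' hb'B) huu' hn' (hx0 b' (Or.inr hb'B))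
        exact ⟨h1, h2, h3⟩
      -- a0 : an A-neighbour of b
      have hbβ : b ≠ α0 := fun h => hAB.ne_of_mem hα0 hbB h.symm
      obtain ⟨a0, ha0D, hba0⟩ :=
        exists_nbr hconn (Or.inr hbB) (Or.inl hα0) hbβ
      have ha0A : a0 ∈ A := by
        rcases ha0D with h | h
        · exact h
        · exact absurd hba0 (hBstable b hbB a0 h)
      obtain ⟨h1₀, h2₀, h3₀⟩ := step2 a0 ha0A hba0.symm
      -- aa, the A-neighbour of u
      have haab : ¬ G.Adj aa b := fun h =>
        Pu aa b (Or.inl haaA) (Or.inr hbB) huaa hub h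
      have haab' : ¬ G.Adj aa b' := by
        intro h
        by_cases hc : G.Adj aa u'
        · exact Pu' aa b' (Or.inl haaA) (Or.inr hb'B) hc.symm hu'b' h
        · exact no_bull hbull huaa h hu'b'.symm (hv1 aa (Or.inl haaA)).symm
            (hv1 b' (Or.inr hb'B)).symm hn' huu' hnv1u hc hnv1u'
      have haau' : G.Adj aa u' := by
        by_contra hc
        exact no_P6 hP6 huaa.symm hux0 hu'x0.symm hu'b' h3₀.symm
          (fun h => hx0 aa (Or.inl haaA) h.symm) hc haab'
          (hAstable aa haaA a0 ha0A) huu' hn' (fun h => h1₀ h.symm)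
          (hx0 b' (Or.inr hb'B)) (hx0 a0 (Or.inl ha0A))
          (fun h => h2₀ h.symm)
      -- bb, a B-neighbour of aa
      have haaβ : aa ≠ β0 := fun h => hAB.ne_of_mem haaA hβ0 h
      obtain ⟨bb, hbbD, haabb⟩ :=
        exists_nbr hconn (Or.inl haaA) (Or.inr hβ0) haaβ
      have hbbB : bb ∈ B := by
        rcases hbbD with h | h
        · exact absurd haabb (hAstable aa haaA bb h)
        · exact h
      have hubb : ¬ G.Adj u bb := fun h =>
        Pu aa bb (Or.inl haaA) (Or.inr hbbB) huaa h haabb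
      have hu'bb : ¬ G.Adj u' bb := fun h =>
        Pu' aa bb (Or.inl haaA) (Or.inr hbbB) haau'.symm h haabb
      -- final bull on u', aa, v1, b, bb
      exact no_bull hbull haau'.symm (hv1 aa (Or.inl haaA)).symm
        (hv1 b (Or.inr hbB)) haabb (hv1 bb (Or.inr hbbB))
        hnv1u' hn hu'bb haab
        (hBstable b hbB bb hbbB)
  -- Chain argument
  let NB : V → Finset V := fun u => Finset.univ.filter (fun c => c ∈ B ∧ G.Adj u c)
  have hWfin : ((Set.toFinite WD).toFinset).Nonempty := by
    obtain ⟨u, hu⟩ := hWne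
    exact ⟨u, by simpa using hu⟩
  obtain ⟨u0, hu0F, hmin⟩ :=
    Finset.exists_min_image ((Set.toFinite WD).toFinset) (fun u => (NB u).card) hWfin
  have hu0 : u0 ∈ WD := by simpa using hu0F
  obtain ⟨-, -, -, b0, hb0B, hu0b0⟩ := hWD u0 hu0
  refine ⟨b0, hb0B, ?_⟩
  intro u hu
  by_contra hnadj
  have hnub0 : ¬ G.Adj u b0 := fun h => hnadj h.symm
  -- since u0 ~ b0 and u ≁ b0, by `main` there is no c with u ~ c and u0 ≁ c
  have hsub : NB u ⊆ NB u0 := by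
    intro c hc
    simp only [NB, Finset.mem_filter, Finset.mem_univ, true_and] at hc ⊢
    refine ⟨hc.1, ?_⟩
    by_contra hcc
    exact main u0 hu0 u hu b0 hb0B c hc.1 hu0b0 hnub0 hc.2 hcc
  have hcard : (NB u0).card ≤ (NB u).card := hmin u (by simpa using hu)
  have heq : NB u = NB u0 := Finset.eq_of_subset_of_card_le hsub hcard
  have hb0mem : b0 ∈ NB u0 := by
    simp only [NB, Finset.mem_filter, Finset.mem_univ, true_and]
    exact ⟨hb0B, hu0b0⟩
  rw [← heq] at hb0mem
  simp only [NB, Finset.mem_filter, Finset.mem_univ, true_and] at hb0mem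
  exact hnub0 hb0mem.2
end

section
/- Every prime graph on at least 3 vertices is P_3-connected. -/
/-- A homogeneous set: every vertex outside `S` is complete or anticomplete to `S`. -/
def IsHomog {V : Type*} (G : SimpleGraph V) (S : Set V) : Prop :=
  ∀ v ∉ S, (∀ s ∈ S, G.Adj v s) ∨ (∀ s ∈ S, ¬ G.Adj v s)

/-- A graph is prime if it has no proper homogeneous set. -/
def IsPrime {V : Type*} (G : SimpleGraph V) : Prop :=
  ¬ ∃ S : Set V, IsHomog G S ∧ 2 ≤ S.ncard ∧ S ≠ Set.univ

/-!
Fix an edge `e` and let `H` be the spanning subgraph of the edges `P₃`-equivalent to `e`.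
If `z` is not covered by `H` and `zs` is an edge with `s` covered, then `z` is adjacent to
every `H`-neighbour `c` of `s`, for otherwise `z s c` is an induced `P₃` putting `sz` into the
class of `e`. As the vertices covered by `H` are `H`-connected, they form a homogeneous set,
so by primality `H` is spanning and connected.

Next, if `xu, xv ∈ H` but the edge `uv` is not, the same argument shows that every edge of
the class of `uv` has both ends in the `H`-neighbourhood of `x`; that class spans `G` too,
so `x` would be its own neighbour. Hence `H` is closed under triangles, and induction along
an `H`-walk from `u` to `v` puts every edge `uv` of `G` into `H`, i.e. `H = G`.
-/

section

open Relation SimpleGraph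

variable {V : Type*} {G : SimpleGraph V} {e : Sym2 V}

theorem P3Step.symm {f g : Sym2 V} : P3Step G f g → P3Step G g f := by
  rintro ⟨u, a, b, rfl, rfl, hua, hub, hab, hnab⟩
  exact ⟨u, b, a, rfl, rfl, hub, hua, hab.symm, fun h => hnab h.symm⟩

instance : Std.Symm (P3Step G) := ⟨fun _ _ => P3Step.symm⟩

def p3ClassGraph (G : SimpleGraph V) (e : Sym2 V) : SimpleGraph V where
  Adj a b := G.Adj a b ∧ ReflTransGen (P3Step G) e s(a, b)
  symm := ⟨fun _ _ h => ⟨h.1.symm, Sym2.eq_swap ▸ h.2⟩⟩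
  loopless := ⟨fun _ h => h.1.ne rfl⟩

theorem p3ClassGraph_le : p3ClassGraph G e ≤ G := fun _ _ h => h.1

theorem adj_of_adj_of_not_reflTransGen {u a b : V} (hua : (p3ClassGraph G e).Adj u a)
    (hub : G.Adj u b) (hb : ¬ ReflTransGen (P3Step G) e s(u, b)) (hab : a ≠ b) :
    G.Adj a b := by
  by_contra hn
  exact hb (hua.2.tail ⟨u, a, b, rfl, rfl, hua.1, hub, hab, hn⟩)

theorem p3ClassGraph_reachable_of_mem (he : e ∈ G.edgeSet) {u : V} (hu : u ∈ e) {f : Sym2 V}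
    (hf : ReflTransGen (P3Step G) e f) {c : V} (hc : c ∈ f) :
    (p3ClassGraph G e).Reachable u c := by
  induction hf generalizing c with
  | refl =>
    by_cases huc : u = c
    · exact huc ▸ Reachable.refl u
    obtain rfl := (Sym2.mem_and_mem_iff huc).mp ⟨hu, hc⟩
    exact Adj.reachable ⟨he, .refl⟩
  | @tail g f hg hstep ih =>
    obtain ⟨w, a, b, rfl, rfl, hwa, hwb, hab, hnab⟩ := hstep
    have hw : (p3ClassGraph G e).Reachable u w := ih (Sym2.mem_mk_left w a)
    rcases Sym2.mem_iff.mp hc with rfl | rfl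
    · exact hw
    · exact hw.trans (Adj.reachable ⟨hwb, hg.tail ⟨w, a, c, rfl, rfl, hwa, hwb, hab, hnab⟩⟩)

theorem p3ClassGraph_reachable_of_mem_support (he : e ∈ G.edgeSet) {u c : V} (hu : u ∈ e)
    (hc : c ∈ (p3ClassGraph G e).support) : (p3ClassGraph G e).Reachable u c := by
  obtain ⟨w, hw⟩ := hc
  exact p3ClassGraph_reachable_of_mem he hu hw.2 (Sym2.mem_mk_left c w)

theorem adj_of_not_mem_support_of_reachable {z s t : V}
    (hz : z ∉ (p3ClassGraph G e).support) (hzs : G.Adj z s)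
    (hst : (p3ClassGraph G e).Reachable s t) : G.Adj z t := by
  obtain ⟨p⟩ := hst
  induction p with
  | nil => exact hzs
  | @cons s c t hsc _ ih =>
    have hsz : ¬ ReflTransGen (P3Step G) e s(s, z) := fun h =>
      hz ⟨s, hzs, Sym2.eq_swap ▸ h⟩
    have hcz : c ≠ z := by
      rintro rfl
      exact hz ⟨s, hsc.symm⟩
    exact ih (adj_of_adj_of_not_reflTransGen hsc hzs.symm hsz hcz).symm

theorem isHomog_support_p3ClassGraph (he : e ∈ G.edgeSet) :
    IsHomog G (p3ClassGraph G e).support := by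
  obtain ⟨u, hu⟩ : ∃ u, u ∈ e := ⟨e.out.1, Sym2.out_fst_mem e⟩
  intro z hz
  by_cases hadj : ∃ s ∈ (p3ClassGraph G e).support, G.Adj z s
  · obtain ⟨s, hs, hzs⟩ := hadj
    left
    intro t ht
    have hst := (p3ClassGraph_reachable_of_mem_support he hu hs).symm.trans
      (p3ClassGraph_reachable_of_mem_support he hu ht)
    exact adj_of_not_mem_support_of_reachable hz hzs hst
  · exact Or.inr fun s hs hzs => hadj ⟨s, hs, hzs⟩

theorem p3ClassGraph_adj_of_reflTransGen {x u v : V} (hxu : (p3ClassGraph G e).Adj x u)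
    (hxv : (p3ClassGraph G e).Adj x v) (huv : ¬ ReflTransGen (P3Step G) e s(u, v))
    {f : Sym2 V} (hf : ReflTransGen (P3Step G) s(u, v) f) {c : V} (hc : c ∈ f) :
    (p3ClassGraph G e).Adj x c := by
  induction hf generalizing c with
  | refl => rcases Sym2.mem_iff.mp hc with rfl | rfl <;> assumption
  | @tail g f hg hstep ih =>
    obtain ⟨w, a, b, rfl, rfl, hwa, hwb, hab, hnab⟩ := hstep
    have hxw := ih (Sym2.mem_mk_left w a)
    have hxa := ih (Sym2.mem_mk_right w a)
    rcases Sym2.mem_iff.mp hc with rfl | rfl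
    · exact hxw
    have hcw : ¬ ReflTransGen (P3Step G) e s(w, c) := fun h =>
      huv (h.trans (symm (hg.tail ⟨w, a, c, rfl, rfl, hwa, hwb, hab, hnab⟩)))
    have hxc_ne : x ≠ c := by
      rintro rfl
      exact hnab hxa.1.symm
    have hxc := adj_of_adj_of_not_reflTransGen hxw.symm hwb hcw hxc_ne
    exact ⟨hxc, hxa.2.tail ⟨x, a, c, rfl, rfl, hxa.1, hxc, hab, hnab⟩⟩

theorem IsPrime.eq_univ_of_isHomog [Finite V] (hG : IsPrime G) {S : Set V}
    (hS : IsHomog G S) {a b : V} (ha : a ∈ S) (hb : b ∈ S) (hab : a ≠ b) : S = Set.univ := by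
  by_contra hne
  refine hG ⟨S, hS, ?_, hne⟩
  calc 2 = ({a, b} : Set V).ncard := (Set.ncard_pair hab).symm
    _ ≤ S.ncard := Set.ncard_le_ncard (Set.insert_subset ha (Set.singleton_subset_iff.mpr hb))

variable [Finite V]

theorem support_p3ClassGraph_eq_univ (hG : IsPrime G) (he : e ∈ G.edgeSet) :
    (p3ClassGraph G e).support = Set.univ := by
  induction e using Sym2.ind with
  | _ a b =>
    have hab : (p3ClassGraph G s(a, b)).Adj a b := ⟨he, .refl⟩
    exact hG.eq_univ_of_isHomog (isHomog_support_p3ClassGraph he) ⟨b, hab⟩ ⟨a, hab.symm⟩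
      hab.ne

theorem p3ClassGraph_connected (hG : IsPrime G) (he : e ∈ G.edgeSet) :
    (p3ClassGraph G e).Connected := by
  obtain ⟨u, hu⟩ : ∃ u, u ∈ e := ⟨e.out.1, Sym2.out_fst_mem e⟩
  have hreach (v : V) : (p3ClassGraph G e).Reachable u v :=
    p3ClassGraph_reachable_of_mem_support he hu
      (support_p3ClassGraph_eq_univ hG he ▸ Set.mem_univ v)
  exact (connected_iff _).mpr ⟨fun v w => (hreach v).symm.trans (hreach w), ⟨u⟩⟩

theorem p3ClassGraph_adj_of_triangle (hG : IsPrime G) {x u v : V}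
    (hxu : (p3ClassGraph G e).Adj x u) (hxv : (p3ClassGraph G e).Adj x v) (huv : G.Adj u v) :
    (p3ClassGraph G e).Adj u v := by
  refine ⟨huv, by_contra fun hn => ?_⟩
  have hx : x ∈ (p3ClassGraph G s(u, v)).support :=
    support_p3ClassGraph_eq_univ hG (G.mem_edgeSet.2 huv) ▸ Set.mem_univ x
  obtain ⟨w, hw⟩ := hx
  exact (p3ClassGraph G e).irrefl
    (p3ClassGraph_adj_of_reflTransGen hxu hxv hn hw.2 (Sym2.mem_mk_left x w))

theorem p3ClassGraph_adj_of_reachable (hG : IsPrime G) {u v : V}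
    (huv : (p3ClassGraph G e).Reachable u v) (hadj : G.Adj u v) :
    (p3ClassGraph G e).Adj u v := by
  obtain ⟨p⟩ := huv
  induction p with
  | nil => exact absurd hadj G.irrefl
  | @cons u w v huw _ ih =>
    by_cases hwv : w = v
    · exact hwv ▸ huw
    by_contra hn
    have hwv_adj : G.Adj w v :=
      adj_of_adj_of_not_reflTransGen huw hadj (fun h => hn ⟨hadj, h⟩) hwv
    exact hn (p3ClassGraph_adj_of_triangle hG huw.symm (ih hwv_adj) hadj)

theorem p3ClassGraph_eq_self (hG : IsPrime G) (he : e ∈ G.edgeSet) : p3ClassGraph G e = G :=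
  le_antisymm p3ClassGraph_le fun _ _ h =>
    p3ClassGraph_adj_of_reachable hG ((p3ClassGraph_connected hG he).preconnected _ _) h

end

theorem prime_is_P3Connected_general {V : Type*} [Fintype V] (G : SimpleGraph V)
    (hprime : IsPrime G)
    (hedge : G.edgeSet.Nonempty) :
    P3Connected G := by
  obtain ⟨e₀, he₀⟩ := hedge
  refine ⟨p3ClassGraph_eq_self hprime he₀ ▸ p3ClassGraph_connected hprime he₀, ?_⟩
  intro e he f hf
  induction f using Sym2.ind with
  | _ u v =>
    have huv : (p3ClassGraph G e).Adj u v := (p3ClassGraph_eq_self hprime he).symm ▸ hf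
    exact huv.2

/-- Every finite prime graph on at least 3 vertices (with at least one edge) is
`P₃`-connected. -/
theorem prime_is_P3Connected {V : Type*} [Fintype V] (G : SimpleGraph V)
    (hprime : IsPrime G) (hcard : 3 ≤ Fintype.card V)
    (hedge : G.edgeSet.Nonempty) :
    P3Connected G :=
  prime_is_P3Connected_general G hprime hedge
end
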